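/- arXiv:2512.00690 — 8 statements merged into one kernel-verified Lean document; each statement's English description precedes it below -/
import Mathlib

section
/- For all positive integers n, n_1, q_1, one has (q_1+1)·⌈n q_1 / n_1⌉ ≥ ⌈n q_1 (q_1+1) / n_1⌉ > ⌊n q_1 (q_1+1) / (n_1+1)⌋. In particular, with a[e_1,n_1,q_1]_n = e_1(q_1+1)·⌈n q_1/n_1⌉ and ã[e_1,n_1,q_1]_n = e_1·(⌊n q_1(q_1+1)/n_1⌋ + 1), one has a[e_1,n_1,q_1]_n ≥ ã[e_1,n_1+1,q_1]_n for all n. -/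
/-- For positive integers `n, n₁, q₁`:
`(q₁+1)·⌈n q₁ / n₁⌉ ≥ ⌈n q₁ (q₁+1) / n₁⌉ > ⌊n q₁ (q₁+1) / (n₁+1)⌋`, and consequently
`a[e₁,n₁,q₁]_n = e₁(q₁+1)⌈n q₁ / n₁⌉ ≥ e₁·(⌊n q₁(q₁+1)/(n₁+1)⌋ + 1) = ã[e₁,n₁+1,q₁]_n`. -/
theorem ceil_floor_ineq (e₁ n₁ q₁ : ℕ) (he₁ : 0 < e₁) (hn₁ : 0 < n₁) (hq₁ : 0 < q₁)
    (n : ℕ) (hn : 0 < n) :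
    ((q₁ + 1 : ℤ) * ⌈(n * q₁ : ℚ) / n₁⌉ ≥ ⌈(n * q₁ * (q₁ + 1) : ℚ) / n₁⌉ ∧
      ⌈(n * q₁ * (q₁ + 1) : ℚ) / n₁⌉ > ⌊(n * q₁ * (q₁ + 1) : ℚ) / (n₁ + 1)⌋) ∧
    (e₁ * (q₁ + 1) : ℤ) * ⌈(n * q₁ : ℚ) / n₁⌉ ≥
      (e₁ : ℤ) * (⌊(n * q₁ * (q₁ + 1) : ℚ) / (n₁ + 1)⌋ + 1) := by
  have hn₁' : (0 : ℚ) < n₁ := by exact_mod_cast hn₁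
  have hA : (0 : ℚ) < n * q₁ * (q₁ + 1) := by positivity
  have h1 : (q₁ + 1 : ℤ) * ⌈(n * q₁ : ℚ) / n₁⌉ ≥ ⌈(n * q₁ * (q₁ + 1) : ℚ) / n₁⌉ := by
    rw [ge_iff_le, Int.ceil_le]
    push_cast
    have := Int.le_ceil ((n * q₁ : ℚ) / n₁)
    have hq : (0 : ℚ) ≤ (q₁ : ℚ) + 1 := by positivity
    calc (n : ℚ) * q₁ * (q₁ + 1) / n₁ = ((q₁ : ℚ) + 1) * ((n * q₁ : ℚ) / n₁) := by ring
    _ ≤ ((q₁ : ℚ) + 1) * ⌈(n * q₁ : ℚ) / n₁⌉ := by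
        exact mul_le_mul_of_nonneg_left this hq
  have h2 : ⌈(n * q₁ * (q₁ + 1) : ℚ) / n₁⌉ > ⌊(n * q₁ * (q₁ + 1) : ℚ) / (n₁ + 1)⌋ := by
    have hlt : (n * q₁ * (q₁ + 1) : ℚ) / (n₁ + 1) < (n * q₁ * (q₁ + 1) : ℚ) / n₁ := by
      apply div_lt_div_of_pos_left hA hn₁'
      linarith
    have := Int.floor_le ((n * q₁ * (q₁ + 1) : ℚ) / (n₁ + 1))
    have := Int.le_ceil ((n * q₁ * (q₁ + 1) : ℚ) / n₁)
    exact_mod_cast lt_of_le_of_lt (Int.floor_le _) (lt_of_lt_of_le hlt (Int.le_ceil _))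
  refine ⟨⟨h1, h2⟩, ?_⟩
  have h3 : (q₁ + 1 : ℤ) * ⌈(n * q₁ : ℚ) / n₁⌉ ≥ ⌊(n * q₁ * (q₁ + 1) : ℚ) / (n₁ + 1)⌋ + 1 := by
    omega
  have he : (0 : ℤ) ≤ e₁ := by positivity
  calc (e₁ : ℤ) * (⌊(n * q₁ * (q₁ + 1) : ℚ) / (n₁ + 1)⌋ + 1)
      ≤ (e₁ : ℤ) * ((q₁ + 1) * ⌈(n * q₁ : ℚ) / n₁⌉) := mul_le_mul_of_nonneg_left h3 he
    _ = (e₁ * (q₁ + 1) : ℤ) * ⌈(n * q₁ : ℚ) / n₁⌉ := by ring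
end

section
/- For any positive integers e_1, n_1, q_1, the sequence b[e_1,n_1,q_1] defined by b_n = max{ e_1(q_1+1)·⌈n q_1/n_1⌉, e_1·(⌊n q_1(q_1+1)/n_1⌋ + 1) } is subadditive. -/
/-- The sequence `b[e₁,n₁,q₁]_n = max { e₁(q₁+1)·⌈n q₁/n₁⌉, e₁·(⌊n q₁(q₁+1)/n₁⌋ + 1) }`
is subadditive. -/
theorem b_seq_subadditive (e₁ n₁ q₁ : ℕ) (he₁ : 0 < e₁) (hn₁ : 0 < n₁) (hq₁ : 0 < q₁) :
    ∀ n m : ℕ, 1 ≤ n → 1 ≤ m →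
      max ((e₁ * (q₁ + 1) : ℤ) * ⌈((n + m) * q₁ : ℚ) / n₁⌉)
          ((e₁ : ℤ) * (⌊((n + m) * q₁ * (q₁ + 1) : ℚ) / n₁⌋ + 1)) ≤
        max ((e₁ * (q₁ + 1) : ℤ) * ⌈(n * q₁ : ℚ) / n₁⌉)
            ((e₁ : ℤ) * (⌊(n * q₁ * (q₁ + 1) : ℚ) / n₁⌋ + 1)) +
          max ((e₁ * (q₁ + 1) : ℤ) * ⌈(m * q₁ : ℚ) / n₁⌉)
              ((e₁ : ℤ) * (⌊(m * q₁ * (q₁ + 1) : ℚ) / n₁⌋ + 1)) := by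
  intro n m _ _
  have hn₁' : (n₁ : ℚ) ≠ 0 := by positivity
  have hsplit : ((n + m) * q₁ : ℚ) / n₁ = (n * q₁ : ℚ) / n₁ + (m * q₁ : ℚ) / n₁ := by
    field_simp
  have hsplit2 : ((n + m) * q₁ * (q₁ + 1) : ℚ) / n₁
      = (n * q₁ * (q₁ + 1) : ℚ) / n₁ + (m * q₁ * (q₁ + 1) : ℚ) / n₁ := by
    field_simp
  apply max_le
  · calc (e₁ * (q₁ + 1) : ℤ) * ⌈((n + m) * q₁ : ℚ) / n₁⌉
        ≤ (e₁ * (q₁ + 1) : ℤ) * (⌈(n * q₁ : ℚ) / n₁⌉ + ⌈(m * q₁ : ℚ) / n₁⌉) := by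
          apply mul_le_mul_of_nonneg_left _ (by positivity)
          rw [hsplit]; exact Int.ceil_add_le _ _
      _ = (e₁ * (q₁ + 1) : ℤ) * ⌈(n * q₁ : ℚ) / n₁⌉
            + (e₁ * (q₁ + 1) : ℤ) * ⌈(m * q₁ : ℚ) / n₁⌉ := by ring
      _ ≤ _ := add_le_add (le_max_left _ _) (le_max_left _ _)
  · calc (e₁ : ℤ) * (⌊((n + m) * q₁ * (q₁ + 1) : ℚ) / n₁⌋ + 1)
        ≤ (e₁ : ℤ) * ((⌊(n * q₁ * (q₁ + 1) : ℚ) / n₁⌋ + 1)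
            + (⌊(m * q₁ * (q₁ + 1) : ℚ) / n₁⌋ + 1)) := by
          apply mul_le_mul_of_nonneg_left _ (by positivity)
          rw [hsplit2]
          have := Int.le_floor_add_floor ((n * q₁ * (q₁ + 1) : ℚ) / n₁)
            ((m * q₁ * (q₁ + 1) : ℚ) / n₁)
          omega
      _ = (e₁ : ℤ) * (⌊(n * q₁ * (q₁ + 1) : ℚ) / n₁⌋ + 1)
            + (e₁ : ℤ) * (⌊(m * q₁ * (q₁ + 1) : ℚ) / n₁⌋ + 1) := by ring
      _ ≤ _ := add_le_add (le_max_right _ _) (le_max_right _ _)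
end

section
/- Let R be a commutative ring, 𝔪 ⊂ R an ideal, and a = (a_n)_{n≥1} a subadditive sequence of natural numbers. Let ã be the sequence with ã_n = a_n + 1. If D = (D_n)_{n=0}^m is a Hasse-Schmidt derivation over a field k such that D_n(R) ⊆ 𝔪^{ã_n} for every n ≥ 1, then D is 𝔪-logarithmically a-bounded; that is, D_n(𝔪^{n'}) ⊆ 𝔪^{a_n + n'} for every n ≥ 1 and n' ≥ 0. -/
/-- A Hasse-Schmidt derivation of length `m` (with `m = ⊤` allowed, meaning infinite length)
on a commutative `k`-algebra `R`: a sequence of `k`-linear endomorphisms with `D_0 = id`,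
satisfying the Leibniz rule `D_i (x*y) = ∑_{j+l=i} D_j x * D_l y` for `i ≤ m`,
and vanishing in degrees `> m`. -/
structure HSDer (k : Type*) (R : Type*) [CommRing k] [CommRing R] [Algebra k R]
    (m : ℕ∞) where
  toFun : ℕ → R →ₗ[k] R
  map_zero' : toFun 0 = LinearMap.id
  leibniz' : ∀ i : ℕ, (i : ℕ∞) ≤ m → ∀ x y : R,
    toFun i (x * y) = ∑ jl ∈ Finset.HasAntidiagonal.antidiagonal i, toFun jl.1 x * toFun jl.2 y
  eq_zero' : ∀ i : ℕ, m < (i : ℕ∞) → toFun i = 0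

/-- If a Hasse-Schmidt derivation `D` of length `m` satisfies `D_n(R) ⊆ 𝔪^{a_n + 1}` for
all `n ≥ 1` (i.e. `D` is `𝔪`-adically `ã`-bounded, `ã_n = a_n + 1`), where `a` is a
subadditive sequence, then `D` is `𝔪`-logarithmically `a`-bounded:
`D_n(𝔪^{n'}) ⊆ 𝔪^{a_n + n'}` for all `n ≥ 1`, `n' ≥ 0`. -/
theorem adically_bounded_to_log_bounded (k R : Type*) [Field k] [CommRing R] [Algebra k R]
    (𝔪 : Ideal R) (a : ℕ → ℕ)
    (ha : ∀ n m : ℕ, 1 ≤ n → 1 ≤ m → a (n + m) ≤ a n + a m)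
    (m : ℕ∞) (D : HSDer k R m)
    (hD : ∀ n : ℕ, 1 ≤ n → ∀ x : R, D.toFun n x ∈ 𝔪 ^ (a n + 1)) :
    ∀ n : ℕ, 1 ≤ n → ∀ n' : ℕ, ∀ x ∈ 𝔪 ^ n', D.toFun n x ∈ 𝔪 ^ (a n + n') := by
  have aux : ∀ {p q r : ℕ}, r ≤ p + q → ∀ {x y : R}, x ∈ 𝔪 ^ p → y ∈ 𝔪 ^ q →
      x * y ∈ 𝔪 ^ r := by
    intro p q r h x y hx hy
    exact Ideal.pow_le_pow_right h (by rw [pow_add]; exact Ideal.mul_mem_mul hx hy)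
  suffices h : ∀ n' : ℕ, ∀ n : ℕ, 1 ≤ n → ∀ x ∈ 𝔪 ^ n', D.toFun n x ∈ 𝔪 ^ (a n + n') by
    exact fun n hn n' x hx => h n' n hn x hx
  intro n'
  induction n' with
  | zero =>
    intro n hn x _
    exact Ideal.pow_le_pow_right (by omega) (hD n hn x)
  | succ n' ih =>
    intro n hn x hx
    rw [pow_succ] at hx
    refine Submodule.mul_induction_on hx ?_ ?_
    · intro z hz y hy
      by_cases hm : (n : ℕ∞) ≤ m
      · rw [D.leibniz' n hm z y]
        refine Ideal.sum_mem _ ?_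
        rintro ⟨j, l⟩ hjl
        rw [Finset.HasAntidiagonal.mem_antidiagonal] at hjl
        simp only at hjl ⊢
        rcases Nat.eq_zero_or_pos j with hj | hj
        · subst hj
          obtain rfl : n = l := by omega
          rw [D.map_zero']
          exact aux (p := n') (q := a n + 1) (by omega) hz (hD n hn y)
        rcases Nat.eq_zero_or_pos l with hl | hl
        · subst hl
          rw [D.map_zero']
          obtain rfl : n = j := by omega
          exact aux (p := a n + n') (q := 1) (by omega) (ih n hj z hz) (by simpa using hy)
        · have h1 := ih j hj z hz
          have h2 := hD l hl y
          have h3 : a n ≤ a j + a l := by rw [← hjl]; exact ha j l hj hl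
          exact aux (p := a j + n') (q := a l + 1) (by omega) h1 h2
      · rw [D.eq_zero' n (lt_of_not_ge hm)]
        simp
    · intro u v hu hv
      rw [map_add]
      exact Ideal.add_mem _ hu hv
end

section
/- Let R be a commutative k-algebra, 𝔪 ⊂ R an ideal, and a a subadditive sequence in ℕ. If D and E are Hasse-Schmidt derivations of length m on R that are both 𝔪-logarithmically a-bounded, then their composition D ∘ E (with (D∘E)_i = Σ_{j+k=i} D_j ∘ E_k) is also 𝔪-logarithmically a-bounded. -/
/-- If `D` and `E` are `𝔪`-logarithmically `a`-bounded Hasse-Schmidt derivations of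
length `m` (`a` subadditive) and `F` is their composition,
`F_i = ∑_{j+l=i} D_j ∘ E_l`, then `F` is `𝔪`-logarithmically `a`-bounded. -/
theorem comp_log_bounded (k R : Type*) [Field k] [CommRing R] [Algebra k R]
    (𝔪 : Ideal R) (a : ℕ → ℕ)
    (ha : ∀ n m : ℕ, 1 ≤ n → 1 ≤ m → a (n + m) ≤ a n + a m)
    (m : ℕ∞) (D E F : HSDer k R m)
    (hF : ∀ i : ℕ, (i : ℕ∞) ≤ m →
      F.toFun i = ∑ jl ∈ Finset.HasAntidiagonal.antidiagonal i, (D.toFun jl.1).comp (E.toFun jl.2))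
    (hD : ∀ n : ℕ, 1 ≤ n → ∀ n' : ℕ, ∀ x ∈ 𝔪 ^ n', D.toFun n x ∈ 𝔪 ^ (a n + n'))
    (hE : ∀ n : ℕ, 1 ≤ n → ∀ n' : ℕ, ∀ x ∈ 𝔪 ^ n', E.toFun n x ∈ 𝔪 ^ (a n + n')) :
    ∀ n : ℕ, 1 ≤ n → ∀ n' : ℕ, ∀ x ∈ 𝔪 ^ n', F.toFun n x ∈ 𝔪 ^ (a n + n') := by
  intro n hn n' x hx
  by_cases hm : (n : ℕ∞) ≤ m
  · rw [hF n hm]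
    simp only [LinearMap.coe_sum, Finset.sum_apply, LinearMap.comp_apply]
    apply Ideal.sum_mem
    intro jl hjl
    rw [Finset.HasAntidiagonal.mem_antidiagonal] at hjl
    rcases Nat.eq_zero_or_pos jl.1 with h1 | h1
    · have h2 : jl.2 = n := by omega
      rw [h1, h2, D.map_zero', LinearMap.id_apply]
      exact hE n hn n' x hx
    rcases Nat.eq_zero_or_pos jl.2 with h2 | h2
    · have h1' : jl.1 = n := by omega
      rw [h2, h1', E.map_zero', LinearMap.id_apply]
      exact hD n hn n' x hx
    · have h := hD jl.1 h1 (a jl.2 + n') _ (hE jl.2 h2 n' x hx)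
      have hsub := ha jl.1 jl.2 h1 h2
      rw [hjl] at hsub
      refine Ideal.pow_le_pow_right ?_ h
      omega
  · push_neg at hm
    rw [F.eq_zero' n hm]
    simp
end

section
/- Let (R, 𝔫) be a Noetherian local ring, M a finitely presented R-module, and set H = Hom_R(M, R) and H_n = Hom_R(M, 𝔫^n), viewed as submodules of H via the inclusion 𝔫^n ⊆ R. Then there exists a positive integer C such that H_n ⊆ 𝔫^{n−C}·H for every n ≥ C. -/
/-- Auxiliary: a tuple with all components in `I` lies in `I • ⊤`. -/
lemma pi_mem_ideal_smul_top {R : Type*} [CommRing R] (I : Ideal R) {k : ℕ}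
    (x : Fin k → R) (h : ∀ i, x i ∈ I) : x ∈ I • (⊤ : Submodule R (Fin k → R)) := by
  have hx : x = ∑ i : Fin k, x i • (Pi.single i (1 : R) : Fin k → R) := by
    ext j
    simp [Pi.single_apply, Finset.sum_apply, mul_comm]
  rw [hx]
  exact Submodule.sum_mem _ fun i _ =>
    Submodule.smul_mem_smul (h i) Submodule.mem_top

/-- Let `(R, 𝔫)` be a Noetherian local ring and `M` a finitely presented `R`-module.
With `H = Hom_R(M, R)` and `H_n = Hom_R(M, 𝔫^n) ⊆ H`, there is a positive integer `C`
such that `H_n ⊆ 𝔫^(n-C)·H` for all `n ≥ C`. -/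
theorem hom_into_power_le_smul_hom (R M : Type*) [CommRing R] [IsNoetherianRing R]
    [IsLocalRing R] [AddCommGroup M] [Module R M] [Module.FinitePresentation R M] :
    ∃ C : ℕ, 0 < C ∧ ∀ n : ℕ, C ≤ n → ∀ f : M →ₗ[R] R,
      (∀ x : M, f x ∈ IsLocalRing.maximalIdeal R ^ n) →
      f ∈ (IsLocalRing.maximalIdeal R ^ (n - C) • (⊤ : Submodule R (M →ₗ[R] R))) := by
  classical
  set 𝔫 := IsLocalRing.maximalIdeal R
  obtain ⟨k, g, hg⟩ := Module.Finite.exists_fin (R := R) (M := M)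
  -- evaluation map on the generators
  let ι : (M →ₗ[R] R) →ₗ[R] (Fin k → R) := LinearMap.pi fun i => LinearMap.applyₗ (g i)
  have hι_inj : Function.Injective ι := by
    intro f f' hff'
    apply LinearMap.ext_on hg
    rintro x ⟨i, rfl⟩
    exact congrFun hff' i
  set N : Submodule R (Fin k → R) := LinearMap.range ι with hN
  obtain ⟨k₀, hk₀⟩ := Ideal.exists_pow_inf_eq_pow_smul 𝔫 N
  refine ⟨k₀ + 1, Nat.succ_pos _, fun n hn f hf => ?_⟩
  have h1 : ι f ∈ 𝔫 ^ n • ⊤ ⊓ N :=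
    ⟨pi_mem_ideal_smul_top _ _ fun i => hf (g i), ⟨f, rfl⟩⟩
  rw [hk₀ n (le_trans (Nat.le_succ k₀) hn)] at h1
  have h2 : ι f ∈ 𝔫 ^ (n - (k₀ + 1)) • N := by
    exact Submodule.smul_mono (Ideal.pow_le_pow_right (by omega)) inf_le_right h1
  have h3 : ι f ∈ Submodule.map ι (𝔫 ^ (n - (k₀ + 1)) • ⊤) := by
    rwa [Submodule.map_smul'', Submodule.map_top]
  obtain ⟨f', hf', hff'⟩ := h3
  rwa [← hι_inj hff']
end

section
/- Let R be a commutative k-algebra, D ∈ HS_k^m(R), and n ≥ 1. Define D[n] = (E_i)_{i=0}^{mn+n−1} by E_{jn} = D_j for 0 ≤ j ≤ m and E_i = 0 if n does not divide i. Then D[n] is a Hasse-Schmidt derivation of length mn+n−1, and the map [n] : HS_k^m(R) → HS_k^{mn+n−1}(R) is a group homomorphism. -/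

lemma sum_antidiag_dilate {M : Type*} [AddCommMonoid M] {n : ℕ} (hn : 1 ≤ n) (q : ℕ)
    (f : ℕ × ℕ → M)
    (hf : ∀ jl ∈ Finset.HasAntidiagonal.antidiagonal (q*n), ¬ n ∣ jl.1 → f jl = 0) :
    ∑ jl ∈ Finset.HasAntidiagonal.antidiagonal (q*n), f jl
      = ∑ ab ∈ Finset.HasAntidiagonal.antidiagonal q, f (ab.1*n, ab.2*n) := by
  rw [← Finset.sum_filter_add_sum_filter_not (Finset.HasAntidiagonal.antidiagonal (q*n)) (fun jl => n ∣ jl.1)]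
  rw [Finset.sum_eq_zero (fun jl hjl => hf jl (Finset.mem_filter.mp hjl).1
    (Finset.mem_filter.mp hjl).2), add_zero]
  refine Finset.sum_nbij' (fun jl => (jl.1/n, jl.2/n)) (fun ab => (ab.1*n, ab.2*n)) ?_ ?_ ?_ ?_ ?_
  · rintro ⟨a, b⟩ h
    simp only [Finset.mem_filter, Finset.HasAntidiagonal.mem_antidiagonal] at h ⊢
    have hb : n ∣ b := (Nat.dvd_add_right h.2).mp (h.1 ▸ Dvd.intro_left q rfl)
    obtain ⟨c, hc⟩ := h.2
    obtain ⟨d, hd⟩ := hb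
    subst hc hd
    rw [Nat.mul_div_cancel_left _ hn, Nat.mul_div_cancel_left _ hn]
    have := h.1
    have hn' : 0 < n := hn
    nlinarith [h.1]
  · rintro ⟨a, b⟩ h
    simp only [Finset.mem_filter, Finset.HasAntidiagonal.mem_antidiagonal] at h ⊢
    exact ⟨by rw [← add_mul, h], Dvd.intro_left a rfl⟩
  · rintro ⟨a, b⟩ h
    simp only [Finset.mem_filter, Finset.HasAntidiagonal.mem_antidiagonal] at h
    have hb : n ∣ b := (Nat.dvd_add_right h.2).mp (h.1 ▸ Dvd.intro_left q rfl)
    obtain ⟨c, hc⟩ := h.2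
    obtain ⟨d, hd⟩ := hb
    subst hc hd
    simp [Nat.mul_div_cancel_left _ hn, mul_comm]
  · rintro ⟨a, b⟩ h
    simp [Nat.mul_div_cancel_left, Nat.lt_of_lt_of_le Nat.zero_lt_one hn]
  · rintro ⟨a, b⟩ h
    simp only [Finset.mem_filter, Finset.HasAntidiagonal.mem_antidiagonal] at h
    have hb : n ∣ b := (Nat.dvd_add_right h.2).mp (h.1 ▸ Dvd.intro_left q rfl)
    obtain ⟨c, hc⟩ := h.2
    obtain ⟨d, hd⟩ := hb
    subst hc hd
    simp [Nat.mul_div_cancel_left _ hn, mul_comm]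

lemma dil_le {m n q : ℕ} (hn : 1 ≤ n) (h : q * n ≤ m * n + n - 1) : q ≤ m := by
  by_contra hq
  have h1 : (m + 1) * n ≤ q * n := Nat.mul_le_mul_right n (by omega)
  have : (m+1)*n = m*n+n := by ring
  omega

lemma dil_lt {m n q : ℕ} (hn : 1 ≤ n) (h : m * n + n - 1 < q * n) : m < q := by
  by_contra hq
  have h1 : q * n ≤ m * n := Nat.mul_le_mul_right n (by omega)
  omega

/-- Dilation: for `D ∈ HS_k^m(R)` and `n ≥ 1`, `D[n]` defined by `(D[n])_{jn} = D_j` and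
`(D[n])_i = 0` for `n ∤ i` is a Hasse-Schmidt derivation of length `mn + n - 1`, and
`[n] : HS_k^m(R) → HS_k^{mn+n-1}(R)` is a group homomorphism (it sends compositions to
compositions). -/
theorem dilation_hsDer (k R : Type*) [Field k] [CommRing R] [Algebra k R]
    (m n : ℕ) (hn : 1 ≤ n) :
    ∃ dil : HSDer k R m → HSDer k R (m * n + n - 1 : ℕ),
      (∀ D : HSDer k R m, ∀ j : ℕ, j ≤ m → (dil D).toFun (j * n) = D.toFun j) ∧
      (∀ D : HSDer k R m, ∀ i : ℕ, ¬ n ∣ i → (dil D).toFun i = 0) ∧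
      ∀ D₁ D₂ D₃ : HSDer k R m,
        (∀ i : ℕ, (i : ℕ∞) ≤ (m : ℕ∞) → D₃.toFun i =
          ∑ jl ∈ Finset.HasAntidiagonal.antidiagonal i, (D₁.toFun jl.1).comp (D₂.toFun jl.2)) →
        ∀ i : ℕ, (i : ℕ∞) ≤ ((m * n + n - 1 : ℕ) : ℕ∞) → (dil D₃).toFun i =
          ∑ jl ∈ Finset.HasAntidiagonal.antidiagonal i, ((dil D₁).toFun jl.1).comp ((dil D₂).toFun jl.2) := by
  classical
  refine ⟨fun D => {
    toFun := fun i => if n ∣ i then D.toFun (i / n) else 0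
    map_zero' := by simp [D.map_zero']
    leibniz' := ?_
    eq_zero' := ?_ }, ?_, ?_, ?_⟩
  · intro i hi x y
    rw [Nat.cast_le] at hi
    by_cases hd : n ∣ i
    · obtain ⟨q, rfl⟩ := hd
      rw [mul_comm n q] at hi ⊢
      have hq : q ≤ m := dil_le hn hi
      beta_reduce
      rw [if_pos (Dvd.intro_left q rfl), Nat.mul_div_cancel _ hn]
      rw [D.leibniz' q (by exact_mod_cast hq) x y]
      rw [sum_antidiag_dilate hn q
        (fun jl => (if n ∣ jl.1 then D.toFun (jl.1 / n) else 0) x *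
          (if n ∣ jl.2 then D.toFun (jl.2 / n) else 0) y)
        (by
          intro jl _ hnd
          beta_reduce
          rw [if_neg hnd]
          simp)]
      refine Finset.sum_congr rfl fun ab _ => ?_
      rw [if_pos (Dvd.intro_left _ rfl), if_pos (Dvd.intro_left _ rfl),
        Nat.mul_div_cancel _ hn, Nat.mul_div_cancel _ hn]
    · beta_reduce
      rw [if_neg hd, eq_comm]
      apply Finset.sum_eq_zero
      intro jl hjl
      rw [Finset.HasAntidiagonal.mem_antidiagonal] at hjl
      by_cases h1 : n ∣ jl.1
      · have h2 : ¬ n ∣ jl.2 := fun h2 => hd (hjl ▸ Nat.dvd_add h1 h2)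
        rw [if_neg h2]; simp
      · rw [if_neg h1]; simp
  · intro i hi
    rw [Nat.cast_lt] at hi
    by_cases hd : n ∣ i
    · obtain ⟨q, rfl⟩ := hd
      rw [mul_comm n q] at hi ⊢
      beta_reduce
      rw [if_pos (Dvd.intro_left q rfl), Nat.mul_div_cancel _ hn]
      exact D.eq_zero' q (by exact_mod_cast dil_lt hn hi)
    · beta_reduce
      rw [if_neg hd]
  · intro D j hj
    simp [Nat.mul_div_cancel _ hn, Dvd.intro_left j rfl]
  · intro D i hd
    simp [if_neg hd]
  · intro D₁ D₂ D₃ h3 i hi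
    rw [Nat.cast_le] at hi
    by_cases hd : n ∣ i
    · obtain ⟨q, rfl⟩ := hd
      rw [mul_comm n q] at hi ⊢
      have hq : q ≤ m := dil_le hn hi
      dsimp only
      rw [if_pos (Dvd.intro_left q rfl), Nat.mul_div_cancel _ hn]
      rw [h3 q (by exact_mod_cast hq)]
      rw [sum_antidiag_dilate hn q
        (fun jl => ((if n ∣ jl.1 then D₁.toFun (jl.1 / n) else 0)).comp
          ((if n ∣ jl.2 then D₂.toFun (jl.2 / n) else 0)))
        (by
          intro jl _ hnd
          beta_reduce
          rw [if_neg hnd, LinearMap.zero_comp])]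
      refine Finset.sum_congr rfl fun ab _ => ?_
      rw [if_pos (Dvd.intro_left _ rfl), if_pos (Dvd.intro_left _ rfl),
        Nat.mul_div_cancel _ hn, Nat.mul_div_cancel _ hn]
    · dsimp only
      rw [if_neg hd, eq_comm]
      apply Finset.sum_eq_zero
      intro jl hjl
      rw [Finset.HasAntidiagonal.mem_antidiagonal] at hjl
      by_cases h1 : n ∣ jl.1
      · have h2 : ¬ n ∣ jl.2 := fun h2 => hd (hjl ▸ Nat.dvd_add h1 h2)
        rw [if_neg h2, LinearMap.comp_zero]
      · rw [if_neg h1, LinearMap.zero_comp]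
end

section
/- Let R be a k-algebra, and for 1 ≤ m ≤ ∞ let Der_k^m(R) denote the set of derivations d ∈ Der_k(R) that arise as the degree-1 component D_1 of some Hasse-Schmidt derivation D ∈ HS_k^m(R). Then Der_k^m(R) is an R-submodule of Der_k(R). -/
/-- A derivation `d ∈ Der_k(R)` is `m`-integrable if it is the degree-1 component of some
Hasse-Schmidt derivation of length `m`. -/
def IsIntegrable (k R : Type*) [CommRing k] [CommRing R] [Algebra k R] (m : ℕ∞)
    (d : Derivation k R R) : Prop :=
  ∃ D : HSDer k R m, D.toFun 1 = d.toLinearMap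

open Finset

lemma hs_key {M : Type*} [CommRing M] (n : ℕ) (g h : ℕ → ℕ → M) :
    ∑ ij ∈ antidiagonal n, ∑ pq ∈ antidiagonal ij.1, ∑ ab ∈ antidiagonal ij.2,
      g pq.1 ab.1 * h pq.2 ab.2
    = ∑ st ∈ antidiagonal n, (∑ pa ∈ antidiagonal st.1, g pa.1 pa.2) *
        (∑ qb ∈ antidiagonal st.2, h qb.1 qb.2) := by
  simp_rw [sum_mul_sum, ← Finset.sum_product']
  rw [Finset.sum_sigma', Finset.sum_sigma']
  refine Finset.sum_nbij'
    (i := fun x => ⟨(x.2.1.1 + x.2.2.1, x.2.1.2 + x.2.2.2), ((x.2.1.1, x.2.2.1), (x.2.1.2, x.2.2.2))⟩)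
    (j := fun x => ⟨(x.2.1.1 + x.2.2.1, x.2.1.2 + x.2.2.2), ((x.2.1.1, x.2.2.1), (x.2.1.2, x.2.2.2))⟩)
    ?_ ?_ ?_ ?_ ?_
  · rintro ⟨⟨i, j⟩, ⟨⟨p, q⟩, ⟨a, b⟩⟩⟩ hx
    simp only [mem_sigma, mem_product, Finset.HasAntidiagonal.mem_antidiagonal] at hx ⊢
    exact ⟨by omega, trivial, trivial⟩
  · rintro ⟨⟨s, t⟩, ⟨⟨p, a⟩, ⟨q, b⟩⟩⟩ hx
    simp only [mem_sigma, mem_product, Finset.HasAntidiagonal.mem_antidiagonal] at hx ⊢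
    exact ⟨by omega, trivial, trivial⟩
  · rintro ⟨⟨i, j⟩, ⟨⟨p, q⟩, ⟨a, b⟩⟩⟩ hx
    simp only [mem_sigma, mem_product, Finset.HasAntidiagonal.mem_antidiagonal] at hx
    obtain ⟨h1, h2, h3⟩ := hx
    subst h1 h2 h3
    rfl
  · rintro ⟨⟨s, t⟩, ⟨⟨p, a⟩, ⟨q, b⟩⟩⟩ hx
    simp only [mem_sigma, mem_product, Finset.HasAntidiagonal.mem_antidiagonal] at hx
    obtain ⟨h1, h2, h3⟩ := hx
    subst h1 h2 h3
    rfl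
  · rintro ⟨⟨i, j⟩, ⟨⟨p, q⟩, ⟨a, b⟩⟩⟩ hx
    rfl

section HSOps
variable {k R : Type*} [CommRing k] [CommRing R] [Algebra k R] {m : ℕ∞}

/-- The zero (identity) Hasse–Schmidt derivation. -/
def HSDer.zero : HSDer k R m where
  toFun i := if i = 0 then LinearMap.id else 0
  map_zero' := by simp
  leibniz' i hi x y := by
    rcases Nat.eq_zero_or_pos i with h0 | h0
    · subst h0; simp
    · rw [if_neg (by omega)]
      rw [eq_comm]
      refine Finset.sum_eq_zero ?_
      rintro ⟨a, b⟩ hab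
      rw [Finset.HasAntidiagonal.mem_antidiagonal] at hab
      rcases Nat.eq_zero_or_pos a with ha | ha
      · subst ha
        rw [if_pos rfl, if_neg (by omega)]
        simp
      · rw [if_neg (by omega)]
        simp
  eq_zero' i hi := by
    rw [if_neg]
    rintro rfl
    simp at hi

set_option maxHeartbeats 800000 in
/-- The "sum" of two Hasse–Schmidt derivations: truncated composition product. -/
def HSDer.add (D E : HSDer k R m) : HSDer k R m where
  toFun n := if (n : ℕ∞) ≤ m then
      ∑ ij ∈ antidiagonal n, (D.toFun ij.1) ∘ₗ (E.toFun ij.2) else 0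
  map_zero' := by
    rw [if_pos (by simp)]
    simp [D.map_zero', E.map_zero']
  leibniz' n hn x y := by
    rw [if_pos hn, LinearMap.sum_apply]
    have hle : ∀ i : ℕ, i ≤ n → (i : ℕ∞) ≤ m :=
      fun i h => le_trans (Nat.cast_le.mpr h) hn
    calc ∑ ij ∈ antidiagonal n, (D.toFun ij.1 ∘ₗ E.toFun ij.2) (x * y)
        = ∑ ij ∈ antidiagonal n, ∑ pq ∈ antidiagonal ij.1, ∑ ab ∈ antidiagonal ij.2,
            D.toFun pq.1 (E.toFun ab.1 x) * D.toFun pq.2 (E.toFun ab.2 y) := by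
          refine Finset.sum_congr rfl ?_
          rintro ⟨i, j⟩ hij
          rw [Finset.HasAntidiagonal.mem_antidiagonal] at hij
          simp only [LinearMap.comp_apply]
          rw [E.leibniz' j (hle j (by omega)) x y, map_sum,
            Finset.sum_comm]
          refine Finset.sum_congr rfl ?_
          rintro ⟨a, b⟩ hab
          exact D.leibniz' i (hle i (by omega)) _ _
      _ = ∑ st ∈ antidiagonal n,
            (∑ pa ∈ antidiagonal st.1, D.toFun pa.1 (E.toFun pa.2 x)) *
            (∑ qb ∈ antidiagonal st.2, D.toFun qb.1 (E.toFun qb.2 y)) :=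
          hs_key n (fun p a => D.toFun p (E.toFun a x)) (fun q b => D.toFun q (E.toFun b y))
      _ = ∑ st ∈ antidiagonal n,
            (if (st.1 : ℕ∞) ≤ m then ∑ ij ∈ antidiagonal st.1,
              (D.toFun ij.1) ∘ₗ (E.toFun ij.2) else 0) x *
            (if (st.2 : ℕ∞) ≤ m then ∑ ij ∈ antidiagonal st.2,
              (D.toFun ij.1) ∘ₗ (E.toFun ij.2) else 0) y := by
          refine Finset.sum_congr rfl ?_
          rintro ⟨s, t⟩ hst
          rw [Finset.HasAntidiagonal.mem_antidiagonal] at hst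
          rw [if_pos (hle s (by omega)), if_pos (hle t (by omega)),
            LinearMap.sum_apply, LinearMap.sum_apply]
          simp only [LinearMap.comp_apply]
  eq_zero' n hn := by
    rw [if_neg (not_le.mpr hn)]

/-- Scalar multiple of a Hasse–Schmidt derivation. -/
def HSDer.smul (c : R) (D : HSDer k R m) : HSDer k R m where
  toFun i := c ^ i • D.toFun i
  map_zero' := by simp [D.map_zero']
  leibniz' i hi x y := by
    simp only [LinearMap.smul_apply]
    rw [D.leibniz' i hi x y, Finset.smul_sum]
    refine Finset.sum_congr rfl ?_
    rintro ⟨a, b⟩ hab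
    rw [Finset.HasAntidiagonal.mem_antidiagonal] at hab
    subst hab
    simp only [LinearMap.smul_apply, smul_eq_mul, pow_add]
    ring
  eq_zero' i hi := by rw [D.eq_zero' i hi, smul_zero]

end HSOps


/-- For `1 ≤ m ≤ ∞`, the set `Der_k^m(R)` of `m`-integrable derivations is an
`R`-submodule of `Der_k(R)`. -/

theorem integrable_derivations_submodule (k R : Type*) [Field k] [CommRing R] [Algebra k R]
    (m : ℕ∞) (hm : 1 ≤ m) :
    ∃ N : Submodule R (Derivation k R R), ∀ d : Derivation k R R,
      d ∈ N ↔ IsIntegrable k R m d := by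
    refine ⟨{
    carrier := {d | IsIntegrable k R m d}
    zero_mem' := ⟨HSDer.zero, by
      ext x
      simp [HSDer.zero]⟩
    add_mem' := by
      rintro d₁ d₂ ⟨D, hD⟩ ⟨E, hE⟩
      refine ⟨D.add E, ?_⟩
      show (if ((1 : ℕ) : ℕ∞) ≤ m then
        ∑ ij ∈ antidiagonal 1, (D.toFun ij.1) ∘ₗ (E.toFun ij.2) else 0) = _
      rw [if_pos (by exact_mod_cast hm)]
      rw [Finset.Nat.sum_antidiagonal_succ]
      simp [D.map_zero', E.map_zero', hD, hE, Nat.antidiagonal_zero]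
      ext x
      simp [add_comm]
    smul_mem' := by
      rintro c d ⟨D, hD⟩
      refine ⟨HSDer.smul c D, ?_⟩
      show c ^ 1 • D.toFun 1 = _
      rw [pow_one, hD]
      ext x
      simp
  }, fun d => Iff.rfl⟩
end

section
/- Let R be a k-algebra essentially of finite type over a field k of characteristic p > 0, and assume: (a) leaps occur only at powers of p; (b) R satisfies FL_τ for some τ (the obstruction modules Ob_R^{p^i} stabilize for i ≥ τ); and (c) for every m ≥ 1 and every D ∈ HS_k^m(R), there exists D⁺ ∈ HS_k^{m+1}(R) agreeing with D up to degree l_{m+1} − 1, where l_n ≥ n/q → ∞. Then for every n ≥ 1 and D ∈ HS_k^n(R), D is ∞-integrable if and only if D is m-integrable for every integer m ≥ n. (Key limiting argument: choosing N with l_{m+1} − 1 ≥ n for all m ≥ N, and iterating the extension, each fixed component E^m_{m'} stabilizes as m → ∞, yielding a well-defined element of HS_k^∞(R) restricting to D.) -/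
/-- The sequence `l_n`: `l_n = n / q` if `q = p^τ` divides `n`, and `l_n = n'` if
`n = n'·p^i` with `p ∤ n'` and `i < τ`; it satisfies `l_n ≥ n/q → ∞`. -/
def lseq (p τ n : ℕ) : ℕ :=
  if p ^ τ ∣ n then n / p ^ τ else n / p ^ (n.factorization p)

lemma lseq_ge (p τ : ℕ) (hp : 2 ≤ p) (j M : ℕ) (hM : (j + 1) * p ^ τ ≤ M) :
    j + 1 ≤ lseq p τ M := by
  have hq : 0 < p ^ τ := pow_pos (by omega) τ
  unfold lseq
  split_ifs with h
  · exact (Nat.le_div_iff_mul_le hq).mpr hM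
  · have hM0 : M ≠ 0 := by
      intro h0; rw [h0, Nat.le_zero] at hM; exact Nat.mul_ne_zero (by omega) hq.ne' hM
    have hf : M.factorization p ≤ τ := by
      by_contra hcon
      push_neg at hcon
      exact h (dvd_trans (pow_dvd_pow p hcon.le) (Nat.ordProj_dvd M p))
    calc j + 1 ≤ M / p ^ τ := (Nat.le_div_iff_mul_le hq).mpr hM
      _ ≤ M / p ^ (M.factorization p) :=
        Nat.div_le_div_left (pow_le_pow_right₀ (by omega) hf) (pow_pos (by omega) _)

/-- Let `R` be essentially of finite type over a field `k` of characteristic `p > 0`.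
Assume (a) leaps occur only at powers of `p`; (b) `R` satisfies `FL_τ`
(equivalently, `Der_k^{p^j}(R)` stabilizes for `j ≥ τ`); (c) every `D ∈ HS_k^m(R)`
extends to some `D⁺ ∈ HS_k^{m+1}(R)` agreeing with `D` up to degree `l_{m+1} - 1`.
Then for `n ≥ 1`, `D ∈ HS_k^n(R)` is `∞`-integrable iff it is `m`-integrable for every
integer `m ≥ n`. -/
theorem infty_integrable_iff_m_integrable (k R : Type*) [Field k] [CommRing R] [Algebra k R]
    [Algebra.EssFiniteType k R] (p : ℕ) (hp : p.Prime) [CharP k p]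
    (τ : ℕ) (hτ : 1 ≤ τ)
    (ha : ∀ m : ℕ, 2 ≤ m → (¬ ∃ i : ℕ, 1 ≤ i ∧ m = p ^ i) →
      ∀ d : Derivation k R R,
        IsIntegrable k R ((m - 1 : ℕ) : ℕ∞) d → IsIntegrable k R ((m : ℕ) : ℕ∞) d)
    (hb : ∀ j : ℕ, τ ≤ j → ∀ d : Derivation k R R,
      IsIntegrable k R ((p ^ j : ℕ) : ℕ∞) d ↔ IsIntegrable k R ((p ^ (j + 1) : ℕ) : ℕ∞) d)
    (hc : ∀ m : ℕ, 1 ≤ m → ∀ D : HSDer k R (m : ℕ∞),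
      ∃ D' : HSDer k R ((m + 1 : ℕ) : ℕ∞),
        ∀ j : ℕ, 1 ≤ j → j ≤ lseq p τ (m + 1) - 1 → D'.toFun j = D.toFun j)
    (n : ℕ) (hn : 1 ≤ n) (D : HSDer k R (n : ℕ∞)) :
    (∃ E : HSDer k R (⊤ : ℕ∞), ∀ j : ℕ, j ≤ n → E.toFun j = D.toFun j) ↔
    (∀ m : ℕ, n ≤ m → ∃ E : HSDer k R (m : ℕ∞), ∀ j : ℕ, j ≤ n → E.toFun j = D.toFun j) := by
  have hq : 0 < p ^ τ := pow_pos hp.pos τ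
  constructor
  · -- forward: truncate
    rintro ⟨E, hE⟩ m hm
    refine ⟨⟨fun j => if j ≤ m then E.toFun j else 0, ?_, ?_, ?_⟩, ?_⟩
    · simp [E.map_zero']
    · intro i hi x y
      have him : i ≤ m := by exact_mod_cast hi
      simp only [if_pos him]
      rw [E.leibniz' i le_top x y]
      refine Finset.sum_congr rfl fun jl hjl => ?_
      have hjl' := Finset.HasAntidiagonal.mem_antidiagonal.mp hjl
      rw [if_pos (by omega : jl.1 ≤ m), if_pos (by omega : jl.2 ≤ m)]
    · intro i hi
      have : ¬ i ≤ m := by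
        intro hle
        exact absurd hi (not_lt.mpr (by exact_mod_cast hle))
      simp [this]
    · intro j hj
      simp only
      rw [if_pos (le_trans hj hm), hE j hj]
  · -- backward: limit construction
    intro h
    set N := (n + 1) * p ^ τ with hN
    have hN1 : 1 ≤ N := by
      have := Nat.mul_le_mul (by omega : 1 ≤ n + 1) hq
      simpa using this
    obtain ⟨D0, hD0⟩ := h N (le_trans (by omega : n ≤ (n + 1) * 1) (Nat.mul_le_mul_left _ hq))
    let F : ∀ i : ℕ, HSDer k R ((N + i : ℕ) : ℕ∞) := fun i =>
      Nat.rec D0 (fun i Fi => (hc (N + i) (le_trans hN1 (Nat.le_add_right N i)) Fi).choose) i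
    have Fstep : ∀ i : ℕ, ∀ j : ℕ, 1 ≤ j → j ≤ lseq p τ (N + i + 1) - 1 →
        (F (i + 1)).toFun j = (F i).toFun j :=
      fun i => (hc (N + i) (le_trans hN1 (Nat.le_add_right N i)) (F i)).choose_spec
    -- stabilization
    have stab : ∀ j i i' : ℕ, i ≤ i' → (j + 1) * p ^ τ ≤ N + i + 1 →
        (F i').toFun j = (F i).toFun j := by
      intro j i i' hii' hji
      rcases Nat.eq_zero_or_pos j with rfl | hj
      · rw [(F i').map_zero', (F i).map_zero']
      · induction i' with
        | zero =>
          obtain rfl : i = 0 := Nat.le_zero.mp hii'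
          rfl
        | succ i' ih =>
          rcases Nat.lt_or_ge i (i' + 1) with hlt | hge
          · have h1 : i ≤ i' := Nat.lt_succ_iff.mp hlt
            have hb2 : (j + 1) * p ^ τ ≤ N + i' + 1 := le_trans hji (by omega)
            have hls : j + 1 ≤ lseq p τ (N + i' + 1) := lseq_ge p τ hp.two_le j _ hb2
            rw [Fstep i' j hj (by omega), ih h1]
          · obtain rfl : i = i' + 1 := le_antisymm hii' hge
            rfl
    have hpτ1 : p ^ τ ≤ N := by
      calc p ^ τ = 1 * p ^ τ := (one_mul _).symm
        _ ≤ (n + 1) * p ^ τ := Nat.mul_le_mul_right _ (by omega)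
    refine ⟨⟨fun j => (F (j * p ^ τ)).toFun j, (F (0 * p ^ τ)).map_zero', ?_, ?_⟩, ?_⟩
    · -- Leibniz
      intro i _ x y
      have key : ∀ a : ℕ, a ≤ i → (F (i * p ^ τ)).toFun a = (F (a * p ^ τ)).toFun a := by
        intro a ha
        refine stab a (a * p ^ τ) (i * p ^ τ) (Nat.mul_le_mul_right _ ha) ?_
        have : (a + 1) * p ^ τ = a * p ^ τ + p ^ τ := by ring
        omega
      have hi' : (i : ℕ∞) ≤ ((N + i * p ^ τ : ℕ) : ℕ∞) := by
        have : i ≤ N + i * p ^ τ := by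
          have : i * 1 ≤ i * p ^ τ := Nat.mul_le_mul_left _ hq
          omega
        exact_mod_cast this
      beta_reduce
      rw [← key i le_rfl, (F (i * p ^ τ)).leibniz' i hi' x y]
      refine Finset.sum_congr rfl fun jl hjl => ?_
      have hjl' := Finset.HasAntidiagonal.mem_antidiagonal.mp hjl
      rw [key jl.1 (by omega), key jl.2 (by omega)]
    · -- eq_zero (vacuous)
      intro i hi
      exact absurd hi (not_top_lt)
    · -- restriction
      intro j hj
      have h1 : (F (j * p ^ τ)).toFun j = (F 0).toFun j := by
        refine stab j 0 (j * p ^ τ) (Nat.zero_le _) ?_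
        have : (j + 1) * p ^ τ ≤ (n + 1) * p ^ τ := Nat.mul_le_mul_right _ (by omega)
        omega
      simp only [h1]
      exact hD0 j hj
end
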